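/- For every i : ℕ there exists a positive integer k such that u (i+k) ≠ u i and v (i+k) ≠ v i; that is, neither of the sequences u and v is eventually constant from any index on. -/

import Mathlib

/-!
All `u i` and `v i` lie in the multiplicatively closed set of the numbers `a ^ s / b ^ m` with
`s ∈ ℤ` and `m ≥ 1`, which is also stable under division by `a`. Since `a` and `b` are coprime,
no power of `a` lies in this set: this gives `1 < φ 1 < a` and `u i * v i ≠ a`, hence by induction
`1 < u i` and `1 < v i < a` throughout. So `u` is non-increasing, `v` non-decreasing, `u` drops
strictly whenever `a ≤ u i * v i` and `v` grows strictly whenever `u i * v i < a`. Both cases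
recur: along a run of the second, `v` would grow geometrically with ratio `u i > 1` past `a`;
along a run of the first, `u` would shrink geometrically with ratio `v i / a < 1` below `1`.
-/

open Set

theorem Nat.Coprime.zpow_ne_pow {a b : ℕ} (hab : a.Coprime b) (hb : 1 < b) {m : ℕ} (hm : m ≠ 0)
    (s : ℤ) : (a : ℝ) ^ s ≠ (b : ℝ) ^ m := by
  have hbm : b ^ m ≠ 1 := (Nat.one_lt_pow hm hb).ne'
  obtain ⟨n, rfl | rfl⟩ := Int.eq_nat_or_neg s
  · rw [zpow_natCast]
    norm_cast
    intro h
    have := hab.pow n m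
    rw [h, Nat.coprime_self] at this
    exact hbm this
  · rw [zpow_neg, zpow_natCast]
    intro h
    rw [inv_eq_iff_eq_inv] at h
    have hprod : (a : ℝ) ^ n * (b : ℝ) ^ m = 1 := by
      rw [h, inv_mul_cancel₀ (by positivity)]
    exact hbm (Nat.eq_one_of_mul_eq_one_left (by exact_mod_cast hprod))

def zpowDivPow (a b : ℕ) : Set ℝ :=
  {x | ∃ s : ℤ, ∃ m : ℕ, m ≠ 0 ∧ x = (a : ℝ) ^ s / (b : ℝ) ^ m}

namespace zpowDivPow

variable {a b : ℕ}

theorem mul_mem (ha : a ≠ 0) {x y : ℝ} (hx : x ∈ zpowDivPow a b) (hy : y ∈ zpowDivPow a b) :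
    x * y ∈ zpowDivPow a b := by
  obtain ⟨s, m, hm, rfl⟩ := hx
  obtain ⟨t, n, -, rfl⟩ := hy
  exact ⟨s + t, m + n, by omega, by
    rw [zpow_add₀ (Nat.cast_ne_zero.2 ha), pow_add, div_mul_div_comm]⟩

theorem div_mem (ha : a ≠ 0) {x : ℝ} (hx : x ∈ zpowDivPow a b) : x / a ∈ zpowDivPow a b := by
  obtain ⟨s, m, hm, rfl⟩ := hx
  exact ⟨s - 1, m, hm, by rw [zpow_sub_one₀ (Nat.cast_ne_zero.2 ha)]; ring⟩

theorem zpow_notMem (hab : a.Coprime b) (hb : 1 < b) (n : ℤ) :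
    (a : ℝ) ^ n ∉ zpowDivPow a b := by
  rintro ⟨s, m, hm, h⟩
  have ha : (a : ℝ) ≠ 0 := by
    rintro ha
    rw [Nat.cast_eq_zero.1 ha, Nat.coprime_zero_left] at hab
    omega
  apply hab.zpow_ne_pow hb hm (s - n)
  rw [zpow_sub₀ ha, h]
  field_simp

end zpowDivPow

theorem pow_add_lt_mul_pow_of_isLeast {a b p d : ℕ} (ha : 1 < a) (hab : a ≤ b)
    (hd : IsLeast {k | b ^ p ≤ a ^ (p + k)} d) : a ^ (p + d) < a * b ^ p := by
  rcases d with _ | k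
  · calc a ^ (p + 0) = a ^ p := rfl
      _ ≤ b ^ p := Nat.pow_le_pow_left hab p
      _ < a * b ^ p := lt_mul_left (pow_pos (by omega) p) ha
  · have hk : a ^ (p + k) < b ^ p := by
      by_contra! h
      have := hd.2 h
      omega
    calc a ^ (p + (k + 1)) = a ^ (p + k) * a := by ring
      _ < b ^ p * a := Nat.mul_lt_mul_of_pos_right hk (by omega)
      _ = a * b ^ p := mul_comm _ _

theorem pow_add_div_pow_mem_of_isLeast {a b p d : ℕ} (ha : 1 < a) (hab : a < b)
    (hcop : a.Coprime b) (hp : p ≠ 0) (hd : IsLeast {k | b ^ p ≤ a ^ (p + k)} d) :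
    (a : ℝ) ^ (p + d) / (b : ℝ) ^ p ∈ zpowDivPow a b ∩ Ioo 1 (a : ℝ) := by
  have hbp : (0 : ℝ) < (b : ℝ) ^ p := pow_pos (Nat.cast_pos.2 (by omega)) p
  have hmem : (a : ℝ) ^ (p + d) / (b : ℝ) ^ p ∈ zpowDivPow a b :=
    ⟨(p + d : ℕ), p, hp, by rw [zpow_natCast]⟩
  have hne : (a : ℝ) ^ (p + d) / (b : ℝ) ^ p ≠ 1 := fun h =>
    zpowDivPow.zpow_notMem hcop (ha.trans hab) 0 (by rwa [zpow_zero, ← h])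
  have hle : 1 ≤ (a : ℝ) ^ (p + d) / (b : ℝ) ^ p := by
    rw [one_le_div hbp]
    exact_mod_cast hd.1
  have hlt : (a : ℝ) ^ (p + d) / (b : ℝ) ^ p < a := by
    rw [div_lt_iff₀ hbp]
    exact_mod_cast pow_add_lt_mul_pow_of_isLeast ha hab.le hd
  exact ⟨hmem, lt_of_le_of_ne hle (Ne.symm hne), hlt⟩

def IsStepSequence (a : ℝ) (u v : ℕ → ℝ) : Prop :=
  ∀ i : ℕ, (u i * v i < a → u (i + 1) = u i ∧ v (i + 1) = u i * v i) ∧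
    (a ≤ u i * v i → u (i + 1) = (u i * v i) / a ∧ v (i + 1) = v i)

namespace IsStepSequence

variable {a : ℝ} {u v : ℕ → ℝ}

theorem mem_of_mem_zero (huv : IsStepSequence a u v) {S : Set ℝ}
    (hmul : ∀ x ∈ S, ∀ y ∈ S, x * y ∈ S) (hdiv : ∀ x ∈ S, x / a ∈ S) (haS : a ∉ S)
    (hu0 : u 0 ∈ S ∩ Ioi 1) (hv0 : v 0 ∈ S ∩ Ioo 1 a) (i : ℕ) :
    u i ∈ S ∩ Ioi 1 ∧ v i ∈ S ∩ Ioo 1 a := by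
  induction i with
  | zero => exact ⟨hu0, hv0⟩
  | succ i ih =>
    obtain ⟨⟨huS, hu1⟩, hvS, hv1, hva⟩ := ih
    have hprod := hmul _ huS _ hvS
    rcases lt_or_ge (u i * v i) a with hlt | hge
    · obtain ⟨hu', hv'⟩ := (huv i).1 hlt
      rw [hu', hv']
      exact ⟨⟨huS, hu1⟩, hprod, one_lt_mul_of_lt_of_le hu1 hv1.le, hlt⟩
    · obtain ⟨hu', hv'⟩ := (huv i).2 hge
      have hgt : a < u i * v i := hge.lt_of_ne fun h => haS (h ▸ hprod)
      rw [hu', hv']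
      exact ⟨⟨hdiv _ hprod, (one_lt_div (by linarith)).2 hgt⟩, hvS, hv1, hva⟩

section Bounded

variable (huv : IsStepSequence a u v) (hu : ∀ i, 1 < u i) (hv : ∀ i, v i ∈ Ioo 1 a)
include huv hu hv

theorem u_succ_lt (i : ℕ) (h : a ≤ u i * v i) : u (i + 1) < u i := by
  have hu0 : 0 < u i := by linarith [hu i]
  rw [((huv i).2 h).1, div_lt_iff₀ (zero_lt_one.trans ((hv i).1.trans (hv i).2))]
  exact mul_lt_mul_of_pos_left (hv i).2 hu0

theorem v_lt_succ (i : ℕ) (h : u i * v i < a) : v i < v (i + 1) := by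
  rw [((huv i).1 h).2]
  exact lt_mul_left (by linarith [(hv i).1]) (hu i)

theorem antitone_u : Antitone u := by
  refine antitone_nat_of_succ_le fun i => ?_
  rcases lt_or_ge (u i * v i) a with hlt | hge
  · exact ((huv i).1 hlt).1.le
  · exact (huv.u_succ_lt hu hv i hge).le

theorem monotone_v : Monotone v := by
  refine monotone_nat_of_le_succ fun i => ?_
  rcases lt_or_ge (u i * v i) a with hlt | hge
  · exact (huv.v_lt_succ hu hv i hlt).le
  · exact ((huv i).2 hge).2.ge

theorem exists_ge_mul_lt (i : ℕ) : ∃ j ≥ i, u j * v j < a := by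
  by_contra! h
  have hgeom : ∀ k, u (i + k) = u i * (v i / a) ^ k ∧ v (i + k) = v i := by
    intro k
    induction k with
    | zero => simp
    | succ k ih =>
      obtain ⟨hu', hv'⟩ := (huv (i + k)).2 (h _ (by omega))
      rw [← add_assoc, hu', hv', ih.1, ih.2]
      exact ⟨by ring, rfl⟩
  have hu0 : 0 < u i := by linarith [hu i]
  obtain ⟨k, hk⟩ := exists_pow_lt_of_lt_one (inv_pos.2 hu0)
    ((div_lt_one (zero_lt_one.trans ((hv i).1.trans (hv i).2))).2 (hv i).2)
  have h1 := hu (i + k)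
  rw [(hgeom k).1] at h1
  have h2 := mul_lt_mul_of_pos_left hk hu0
  rw [mul_inv_cancel₀ hu0.ne'] at h2
  linarith

theorem exists_ge_le_mul (i : ℕ) : ∃ j ≥ i, a ≤ u j * v j := by
  by_contra! h
  have hgeom : ∀ k, u (i + k) = u i ∧ v (i + k) = u i ^ k * v i := by
    intro k
    induction k with
    | zero => simp
    | succ k ih =>
      obtain ⟨hu', hv'⟩ := (huv (i + k)).1 (h _ (by omega))
      rw [← add_assoc, hu', hv', ih.1, ih.2]
      exact ⟨rfl, by ring⟩
  obtain ⟨k, hk⟩ := pow_unbounded_of_one_lt a (hu i)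
  have h1 := (hv (i + k)).2
  rw [(hgeom k).2] at h1
  have h2 := mul_lt_mul_of_pos_right hk (by linarith [(hv i).1] : (0 : ℝ) < v i)
  have h3 : a < a * v i := lt_mul_of_one_lt_right (zero_lt_one.trans ((hv i).1.trans (hv i).2)) (hv i).1
  linarith

theorem exists_u_lt_and_v_lt (i : ℕ) : ∃ k, 0 < k ∧ u (i + k) < u i ∧ v i < v (i + k) := by
  obtain ⟨j₁, hj₁, hlt⟩ := huv.exists_ge_mul_lt hu hv i
  obtain ⟨j₂, hj₂, hge⟩ := huv.exists_ge_le_mul hu hv i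
  have hN : i + (max j₁ j₂ + 1 - i) = max j₁ j₂ + 1 := by omega
  refine ⟨max j₁ j₂ + 1 - i, by omega, ?_, ?_⟩ <;> rw [hN]
  · calc u (max j₁ j₂ + 1) ≤ u (j₂ + 1) := huv.antitone_u hu hv (by omega)
      _ < u j₂ := huv.u_succ_lt hu hv j₂ hge
      _ ≤ u i := huv.antitone_u hu hv hj₂
  · calc v i ≤ v j₁ := huv.monotone_v hu hv hj₁
      _ < v (j₁ + 1) := huv.v_lt_succ hu hv j₁ hlt
      _ ≤ v (max j₁ j₂ + 1) := huv.monotone_v hu hv (by omega)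

end Bounded

end IsStepSequence

theorem stmt_8_general (a b : ℕ) (ha : 1 < a) (hab : a < b) (hcop : Nat.Coprime a b)
    (d : ℕ → ℕ) (hd : ∀ p : ℕ, IsLeast {k : ℕ | b ^ p ≤ a ^ (p + k)} (d p))
    (φ : ℕ → ℝ) (hφ : ∀ p : ℕ, φ p = (a : ℝ) ^ (p + d p) / (b : ℝ) ^ p)
    (u v : ℕ → ℝ) (hu0 : u 0 = φ 1) (hv0 : v 0 = φ 1)
    (huv : ∀ i : ℕ,
      (u i * v i < a → u (i + 1) = u i ∧ v (i + 1) = u i * v i) ∧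
      ((a : ℝ) ≤ u i * v i → u (i + 1) = (u i * v i) / a ∧ v (i + 1) = v i)) :
    ∀ i : ℕ, ∃ k : ℕ, 0 < k ∧ u (i + k) ≠ u i ∧ v (i + k) ≠ v i := by
  have ha0 : a ≠ 0 := by omega
  have hφ1 : φ 1 ∈ zpowDivPow a b ∩ Ioo 1 (a : ℝ) :=
    hφ 1 ▸ pow_add_div_pow_mem_of_isLeast ha hab hcop one_ne_zero (hd 1)
  have haS : (a : ℝ) ∉ zpowDivPow a b := by
    simpa using zpowDivPow.zpow_notMem hcop (ha.trans hab) 1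
  have hmem := IsStepSequence.mem_of_mem_zero huv (fun _ hx _ hy => zpowDivPow.mul_mem ha0 hx hy)
    (fun _ hx => zpowDivPow.div_mem ha0 hx) haS (hu0 ▸ ⟨hφ1.1, hφ1.2.1⟩) (hv0 ▸ hφ1)
  intro i
  obtain ⟨k, hk, hlt, hgt⟩ := IsStepSequence.exists_u_lt_and_v_lt huv
    (fun i => (hmem i).1.2) (fun i => (hmem i).2.2) i
  exact ⟨k, hk, hlt.ne, hgt.ne'⟩

theorem stmt_8 (a b : ℕ) (ha : 1 < a) (hab : a < b) (hcop : Nat.Coprime a b)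
    (d : ℕ → ℕ) (hd : ∀ p : ℕ, IsLeast {k : ℕ | b ^ p ≤ a ^ (p + k)} (d p))
    (φ : ℕ → ℝ) (hφ : ∀ p : ℕ, φ p = (a : ℝ) ^ (p + d p) / (b : ℝ) ^ p)
    (F : Set ℝ) (hF : F = Set.range φ)
    (u v : ℕ → ℝ) (hu0 : u 0 = φ 1) (hv0 : v 0 = φ 1)
    (huv : ∀ i : ℕ,
      (u i * v i < a → u (i + 1) = u i ∧ v (i + 1) = u i * v i) ∧
      ((a : ℝ) ≤ u i * v i → u (i + 1) = (u i * v i) / a ∧ v (i + 1) = v i)) :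
    ∀ i : ℕ, ∃ k : ℕ, 0 < k ∧ u (i + k) ≠ u i ∧ v (i + k) ≠ v i :=
  stmt_8_general a b ha hab hcop d hd φ hφ u v hu0 hv0 huv
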